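/- (In classical logic.) For every natural space 𝒱 there is a refinement morphism f from natural Baire space ℬ to 𝒱 that is surjective up to equivalence: for every point x of 𝒱 there is a point p of ℬ with f(p) ≡ x. -/

import Mathlib

/-! # Natural Topology: basic framework (Waaldijk) -/

/-- A pre-natural space: a countable set of basic dots with a decidable
pre-apartness `apart` and a decidable refinement partial order `refines`. -/
structure PreNaturalSpace (V : Type) : Type where
  countable' : Countable V
  apart : V → V → Prop
  refines : V → V → Prop
  apart_dec : DecidableRel apart
  refines_dec : DecidableRel refines
  apart_symm : ∀ a b, apart a b → apart b a
  apart_irrefl : ∀ a, ¬ apart a a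
  apart_mono : ∀ a b c, refines a b → apart c b → apart c a
  refines_refl : ∀ a, refines a a
  refines_trans : ∀ a b c, refines a b → refines b c → refines a c
  refines_antisymm : ∀ a b, refines a b → refines b a → a = b

namespace PreNaturalSpace

variable {V W : Type}

/-- `a ≺ b` : strict refinement. -/
def strict (P : PreNaturalSpace V) (a b : V) : Prop := P.refines a b ∧ a ≠ b

/-- A point is a shrinking sequence of dots deciding every apart pair of dots. -/
structure IsPoint (P : PreNaturalSpace V) (p : ℕ → V) : Prop where
  mono : ∀ n, P.refines (p (n + 1)) (p n)
  shrink : ∀ n, ∃ m, P.strict (p m) (p n)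
  decides : ∀ a b, P.apart a b → ∃ m, P.apart (p m) a ∨ P.apart (p m) b

/-- The set of points of a pre-natural space. -/
def Pt (P : PreNaturalSpace V) : Type := { p : ℕ → V // P.IsPoint p }

/-- `p` begins with the dot `a` : some `p m ≺ a`. -/
def begins (P : PreNaturalSpace V) (p : ℕ → V) (a : V) : Prop := ∃ m, P.strict (p m) a

/-- Apartness between a dot and a point. -/
def dApart (P : PreNaturalSpace V) (a : V) (p : ℕ → V) : Prop := ∃ m, P.apart (p m) a

/-- Apartness between points. -/
def pApart (P : PreNaturalSpace V) (p q : P.Pt) : Prop := ∃ n, P.apart (p.1 n) (q.1 n)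

/-- Equivalence of points: the negation of apartness. -/
def pEquiv (P : PreNaturalSpace V) (p q : P.Pt) : Prop := ¬ P.pApart p q

variable (P : PreNaturalSpace V)

lemma refines_of_le {p : ℕ → V} (hp : ∀ n, P.refines (p (n + 1)) (p n)) :
    ∀ {m k : ℕ}, m ≤ k → P.refines (p k) (p m) := by
  intro m k h
  induction h with
  | refl => exact P.refines_refl _
  | step h ih => exact P.refines_trans _ _ _ (hp _) ih

lemma begins_mono {z : ℕ → V} (hz : P.IsPoint z) {a b : V} (hab : P.refines a b)
    (h : P.begins z a) : P.begins z b := by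
  obtain ⟨j, hj1, hj2⟩ := h
  have hzb : P.refines (z j) b := P.refines_trans _ _ _ hj1 hab
  by_cases he : z j = b
  · obtain ⟨i, hi1, hi2⟩ := hz.shrink j
    exact ⟨i, P.refines_trans _ _ _ hi1 hzb, fun h' => hi2 (h'.trans he.symm)⟩
  · exact ⟨j, hzb, he⟩

/-- The natural (apartness) topology as a predicate on subsets of the point set. -/
def NatOpen (U : Set P.Pt) : Prop :=
  ∀ x ∈ U, ∀ y : P.Pt, P.pApart y x ∨ ∃ m, { z : P.Pt | P.begins z.1 (y.1 m) } ⊆ U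

instance instTopPt : TopologicalSpace P.Pt where
  IsOpen := P.NatOpen
  isOpen_univ := fun _ _ _ => Or.inr ⟨0, fun _ _ => trivial⟩
  isOpen_inter := by
    intro U U' hU hU' x hx y
    rcases hU x hx.1 y with h | ⟨m, hm⟩
    · exact Or.inl h
    rcases hU' x hx.2 y with h | ⟨k, hk⟩
    · exact Or.inl h
    refine Or.inr ⟨max m k, fun z hz => ⟨hm ?_, hk ?_⟩⟩
    · exact P.begins_mono z.2 (P.refines_of_le y.2.mono (le_max_left m k)) hz
    · exact P.begins_mono z.2 (P.refines_of_le y.2.mono (le_max_right m k)) hz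
  isOpen_sUnion := by
    intro S hS x hx y
    obtain ⟨U, hU, hxU⟩ := hx
    rcases hS U hU x hxU y with h | ⟨m, hm⟩
    · exact Or.inl h
    · exact Or.inr ⟨m, fun z hz => ⟨U, hU, hm hz⟩⟩

lemma pEquiv_refl (p : P.Pt) : P.pEquiv p p := fun ⟨_, h⟩ => P.apart_irrefl _ h

lemma pEquiv_symm {p q : P.Pt} (h : P.pEquiv p q) : P.pEquiv q p :=
  fun ⟨n, hn⟩ => h ⟨n, P.apart_symm _ _ hn⟩

lemma pEquiv_trans {p q r : P.Pt} (hpq : P.pEquiv p q) (hqr : P.pEquiv q r) :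
    P.pEquiv p r := by
  rintro ⟨n, hn⟩
  obtain ⟨m, hm⟩ := q.2.decides (p.1 n) (r.1 n) hn
  rcases hm with hm | hm
  · -- q.1 m apart from p.1 n
    refine hpq ⟨max m n, ?_⟩
    have h1 : P.apart (p.1 n) (q.1 (max m n)) :=
      P.apart_mono _ _ _ (P.refines_of_le q.2.mono (le_max_left m n)) (P.apart_symm _ _ hm)
    have h2 : P.apart (q.1 (max m n)) (p.1 (max m n)) :=
      P.apart_mono _ _ _ (P.refines_of_le p.2.mono (le_max_right m n)) (P.apart_symm _ _ h1)
    exact P.apart_symm _ _ h2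
  · refine hqr ⟨max m n, ?_⟩
    have h1 : P.apart (r.1 n) (q.1 (max m n)) :=
      P.apart_mono _ _ _ (P.refines_of_le q.2.mono (le_max_left m n)) (P.apart_symm _ _ hm)
    exact P.apart_mono _ _ _ (P.refines_of_le r.2.mono (le_max_right m n))
      (P.apart_symm _ _ h1)

/-- The setoid of points modulo `≡`. -/
def ptSetoid : Setoid P.Pt :=
  ⟨P.pEquiv, ⟨P.pEquiv_refl, P.pEquiv_symm, P.pEquiv_trans⟩⟩

/-- `â` : the set of points beginning with the dot `a`. -/
def hatSet (a : V) : Set P.Pt := { p | P.begins p.1 a }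

/-- `ā` : the `≡`-closure of `â`. -/
def barSet (a : V) : Set P.Pt := { p | ∃ q : P.Pt, P.begins q.1 a ∧ P.pEquiv p q }

/-- A natural space is basic-open when every `ā` is open. -/
def BasicOpen : Prop := ∀ a : V, IsOpen (P.barSet a)

/-- Existence of a maximal dot. -/
def HasMaxDot : Prop := ∃ m, ∀ a, P.refines a m

/-- Every basic dot begins at least one point. -/
def AllDotsInhabited : Prop := ∀ a : V, ∃ p : ℕ → V, P.IsPoint p ∧ P.begins p a

/-- The conditions making the point set of a pre-natural space a natural space. -/
def IsNaturalSpace : Prop := P.HasMaxDot ∧ P.AllDotsInhabited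

end PreNaturalSpace

/-- A refinement morphism between (pre-)natural spaces: a map on dots sending
points to points and reflecting apartness of points. -/
structure RefMorphism {V W : Type} (P : PreNaturalSpace V) (Q : PreNaturalSpace W) : Type where
  toFun : V → W
  maps_points : ∀ p : ℕ → V, P.IsPoint p → Q.IsPoint (fun n => toFun (p n))
  reflects_apart : ∀ p q : ℕ → V, P.IsPoint p → P.IsPoint q →
    (∃ n, Q.apart (toFun (p n)) (toFun (q n))) → ∃ n, P.apart (p n) (q n)

/-- The induced map on points of a refinement morphism. -/
def RefMorphism.pointMap {V W : Type} {P : PreNaturalSpace V} {Q : PreNaturalSpace W}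
    (f : RefMorphism P Q) (p : P.Pt) : Q.Pt :=
  ⟨fun n => f.toFun (p.1 n), f.maps_points p.1 p.2⟩

namespace PreNaturalSpace

variable {V W : Type} (P : PreNaturalSpace V)

/-- Restriction of a pre-natural space to a subset of dots. -/
noncomputable def restrict (S : Set V) : PreNaturalSpace S where
  countable' := by haveI := P.countable'; exact inferInstance
  apart a b := P.apart a.1 b.1
  refines a b := P.refines a.1 b.1
  apart_dec := Classical.decRel _
  refines_dec := Classical.decRel _
  apart_symm _ _ h := P.apart_symm _ _ h
  apart_irrefl a := P.apart_irrefl a.1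
  apart_mono _ _ _ h1 h2 := P.apart_mono _ _ _ h1 h2
  refines_refl a := P.refines_refl a.1
  refines_trans _ _ _ h1 h2 := P.refines_trans _ _ _ h1 h2
  refines_antisymm _ _ h1 h2 := Subtype.ext (P.refines_antisymm _ _ h1 h2)

/-! ## Trail spaces -/

/-- A `≺`-trail: a finite strictly refining sequence `a₀ ≻ a₁ ≻ …`. -/
def Trail : Type := { l : List V // l.Chain' fun a b => P.strict b a }

lemma strict_trans_flip : Transitive (fun a b : V => P.strict b a) := by
  rintro a b c ⟨h1, h1'⟩ ⟨h2, h2'⟩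
  refine ⟨P.refines_trans _ _ _ h2 h1, fun he => ?_⟩
  exact h2' (P.refines_antisymm _ _ h2 (he ▸ h1))

lemma last_refines_of_prefix {a b : List V}
    (ha : a.Chain' fun x y => P.strict y x) (hpre : b <+: a)
    {x y : V} (hx : x ∈ a.getLast?) (hy : y ∈ b.getLast?) :
    P.refines x y := by
  haveI : IsTrans V (fun x y : V => P.strict y x) := ⟨fun _ _ _ h1 h2 => P.strict_trans_flip h1 h2⟩
  have hpw : a.Pairwise fun x y => P.strict y x := List.isChain_iff_pairwise.mp ha
  obtain ⟨t, rfl⟩ := hpre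
  rcases eq_or_ne t [] with rfl | ht
  · rw [List.append_nil] at hx
    have : x = y := by
      rw [Option.mem_def] at hx hy
      exact Option.some_injective _ (hx ▸ hy ▸ rfl)
    exact this ▸ P.refines_refl x
  · rw [List.getLast?_append_of_ne_nil _ ht] at hx
    have hxt : x ∈ t := List.mem_of_mem_getLast? hx
    have hyb : y ∈ b := List.mem_of_mem_getLast? hy
    have := (List.pairwise_append.mp hpw).2.2 y hyb x hxt
    exact this.1

/-- The trail space of a pre-natural space: dots are `≺`-trails, with
`a ⊑* b` iff `b` is an initial segment of `a`, and `a #* b` iff the last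
dots of `a` and `b` are apart. -/
noncomputable def trailSpace : PreNaturalSpace P.Trail where
  countable' := by haveI := P.countable'; exact inferInstanceAs (Countable
    { l : List V // l.Chain' fun a b => P.strict b a })
  apart a b := ∃ x ∈ a.1.getLast?, ∃ y ∈ b.1.getLast?, P.apart x y
  refines a b := b.1 <+: a.1
  apart_dec := Classical.decRel _
  refines_dec := Classical.decRel _
  apart_symm := by
    rintro a b ⟨x, hx, y, hy, hxy⟩
    exact ⟨y, hy, x, hx, P.apart_symm _ _ hxy⟩
  apart_irrefl := by
    rintro a ⟨x, hx, y, hy, hxy⟩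
    rw [Option.mem_def] at hx hy
    have : x = y := Option.some_injective _ (hx ▸ hy ▸ rfl)
    exact P.apart_irrefl x (this ▸ hxy)
  apart_mono := by
    rintro a b c hab ⟨x, hx, y, hy, hxy⟩
    have hbne : b.1 ≠ [] := by
      intro h
      rw [h] at hy
      simp at hy
    have hane : a.1 ≠ [] := by
      intro h
      exact hbne (List.prefix_nil.mp (h ▸ hab))
    obtain ⟨z, hz⟩ : ∃ z, z ∈ a.1.getLast? := by
      rcases h : a.1.getLast? with _ | z
      · exact absurd (List.getLast?_eq_none_iff.mp h) hane
      · exact ⟨z, rfl⟩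
    have hzy : P.refines z y := P.last_refines_of_prefix a.2 hab hz hy
    exact ⟨x, hx, z, hz, P.apart_mono _ _ _ hzy hxy⟩
  refines_refl a := List.prefix_refl a.1
  refines_trans _ _ _ h1 h2 := h2.trans h1
  refines_antisymm a b h1 h2 :=
    Subtype.ext (h2.eq_of_length (le_antisymm h2.length_le h1.length_le))

end PreNaturalSpace

open Classical in
/-- `p♯(n)` : the `≺`-trail obtained from `p₀, …, p_{n-1}` by deleting repetitions
(for a shrinking sequence `p`, repetitions are consecutive). -/
noncomputable def segList {V : Type} (p : ℕ → V) : ℕ → List V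
  | 0 => []
  | n + 1 =>
    if (segList p n).getLast? = some (p n) then segList p n
    else segList p n ++ [p n]

namespace PreNaturalSpace

variable {V W : Type} (P : PreNaturalSpace V)

/-- The map on trail dots sending a nonempty trail to its last element and
the empty trail to `m`. -/
def lastDot (m : V) (q : P.Trail) : V := q.1.getLast?.getD m

/-- `g` is the point map induced by a trail morphism `f` (a refinement morphism
on the trail space): `g p = f (p♯(0)), f (p♯(1)), …`. -/
def InducedByTrailMorphism (Q : PreNaturalSpace W) (f : RefMorphism P.trailSpace Q)
    (g : P.Pt → Q.Pt) : Prop :=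
  ∀ p : P.Pt, ∃ t : P.trailSpace.Pt, (∀ n, (t.1 n).1 = segList p.1 n) ∧ g p = f.pointMap t

/-- `g` is a natural morphism map: induced by a refinement morphism or by a trail morphism. -/
def IsNaturalMorphismMap (Q : PreNaturalSpace W) (g : P.Pt → Q.Pt) : Prop :=
  (∃ f : RefMorphism P Q, ∀ p, g p = f.pointMap p) ∨
  (∃ f : RefMorphism P.trailSpace Q, P.InducedByTrailMorphism Q f g)

/-- Two natural spaces are isomorphic: natural morphisms both ways, inverse up to `≡`. -/
def AreIsomorphic (Q : PreNaturalSpace W) : Prop :=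
  ∃ (f : P.Pt → Q.Pt) (g : Q.Pt → P.Pt),
    P.IsNaturalMorphismMap Q f ∧ Q.IsNaturalMorphismMap P g ∧
    (∀ x, P.pEquiv (g (f x)) x) ∧ (∀ y, Q.pEquiv (f (g y)) y)

/-- A natural space is a basic neighborhood space iff it is isomorphic to a basic-open space. -/
def IsBasicNbhdSpace : Prop :=
  ∃ (W' : Type) (Q : PreNaturalSpace W'), Q.IsNaturalSpace ∧ Q.BasicOpen ∧ P.AreIsomorphic Q

/-! ## Trees, treas, spreads, spraids, fans -/

/-- `a` is a successor of `c`. -/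
def IsSucc (a c : V) : Prop := P.strict a c ∧ ∀ b, P.strict a b → P.refines b c → b = c

/-- A successor-trail (as a list, each entry a successor of the previous one). -/
def SuccChain (l : List V) : Prop := l.Chain' fun x y => P.IsSucc y x

/-- A successor-trail from `m` to `a`. -/
def IsSuccTrailFromTo (m a : V) (l : List V) : Prop :=
  P.SuccChain l ∧ l.head? = some m ∧ l.getLast? = some a

/-- `(V,⊑)` is a tree. -/
def IsTree : Prop :=
  ∃ m, (∀ a, P.refines a m) ∧ ∀ a, ∃! l : List V, P.IsSuccTrailFromTo m a l

/-- `(V,⊑)` is a trea. -/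
def IsTrea : Prop :=
  ∃ m, (∀ a, P.refines a m) ∧ (∀ a, { b | P.refines a b }.Finite) ∧
    ∀ a, ∃ g : ℕ, ∀ l : List V, P.IsSuccTrailFromTo m a l → l.length = g

/-- Every infinite successor-trail is a point. -/
def SuccTrailsArePoints : Prop :=
  ∀ q : ℕ → V, (∀ n, P.IsSucc (q (n + 1)) (q n)) → P.IsPoint q

def IsSpread : Prop := P.IsTree ∧ P.SuccTrailsArePoints

def IsSpraid : Prop := P.IsTrea ∧ P.SuccTrailsArePoints

/-- Finitely branching: every dot has finitely many successors. -/
def FinBranching : Prop := ∀ a : V, { b | P.IsSucc b a }.Finite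

def IsFan : Prop := P.IsSpread ∧ P.FinBranching

def IsFann : Prop := P.IsSpraid ∧ P.FinBranching

end PreNaturalSpace
/-! ## Natural Baire space and natural Cantor space -/

/-- Natural Baire space: dots are finite sequences of naturals, `b ⊑ a` iff
`a` is an initial segment of `b`, apart iff incomparable. -/
noncomputable def BairePre : PreNaturalSpace (List ℕ) where
  countable' := inferInstance
  apart a b := ¬ a <+: b ∧ ¬ b <+: a
  refines a b := b <+: a
  apart_dec := Classical.decRel _
  refines_dec := Classical.decRel _
  apart_symm _ _ h := ⟨h.2, h.1⟩
  apart_irrefl a h := h.1 (List.prefix_refl a)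
  apart_mono := by
    intro a b c hab hcb
    constructor
    · intro hca
      rcases List.prefix_or_prefix_of_prefix hca hab with h | h
      · exact hcb.1 h
      · exact hcb.2 h
    · intro hac
      exact hcb.2 (hab.trans hac)
  refines_refl a := List.prefix_refl a
  refines_trans _ _ _ h1 h2 := h2.trans h1
  refines_antisymm _ _ h1 h2 := h2.eq_of_length (le_antisymm h2.length_le h1.length_le)

/-- Natural Cantor space: the restriction of natural Baire space to finite 0-1 sequences. -/
noncomputable def CantorPre : PreNaturalSpace ({ l : List ℕ | ∀ x ∈ l, x ≤ 1 }) :=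
  BairePre.restrict { l : List ℕ | ∀ x ∈ l, x ≤ 1 }

/-- The sequence of initial segments of `α ∈ ℕ^ℕ`. -/
def initSegs (α : ℕ → ℕ) (n : ℕ) : List ℕ := (List.range n).map α

/-!
Enumerate the dots as `e` and the pairs of dots as `σ`. A Baire dot `n₀ … n_{k-1}` is sent,
digit by digit, down a strictly refining chain of dots whose `k`-th step decides the pair `σ k`
whenever that pair is apart; the digit `n` selects the dot `e n` if that is an admissible step,
and a fixed admissible dot otherwise. Images of Baire points are therefore points, and
comparable Baire dots have comparable images, so apartness is reflected. A point `x` eventually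
strictly refines every dot it begins with and eventually decides every apart pair, so there are
indices `i₀ < i₁ < …` with `k < i_k` such that `x i_k` is an admissible `k`-th step after
`x i_{k-1}`. Choosing `n_k` with `e n_k = x i_k` gives a Baire point whose image is the
subsequence `x i₀, x i₁, …`, which is equivalent to `x`.
-/

open Filter

namespace PreNaturalSpace

variable {V : Type} (P : PreNaturalSpace V)

lemma not_apart_of_refines {a b : V} (h : P.refines a b) : ¬ P.apart a b :=
  fun hab => P.apart_irrefl a (P.apart_mono a b a h hab)

lemma apart_of_refines_of_apart {a b c : V} (hab : P.refines a b) (hbc : P.apart b c) :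
    P.apart a c :=
  P.apart_symm _ _ (P.apart_mono _ _ _ hab (P.apart_symm _ _ hbc))

lemma strict_of_strict_of_refines {a b c : V} (hab : P.strict a b) (hbc : P.refines b c) :
    P.strict a c :=
  ⟨P.refines_trans _ _ _ hab.1 hbc, by
    rintro rfl
    exact hab.2 (P.refines_antisymm _ _ hab.1 hbc)⟩

lemma strict_of_refines_of_strict {a b c : V} (hab : P.refines a b) (hbc : P.strict b c) :
    P.strict a c :=
  ⟨P.refines_trans _ _ _ hab hbc.1, by
    rintro rfl
    exact hbc.2 (P.refines_antisymm _ _ hbc.1 hab)⟩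

def Admissible (w : V × V) (c d : V) : Prop :=
  P.strict d c ∧ (P.apart w.1 w.2 → P.apart d w.1 ∨ P.apart d w.2)

variable {P}

lemma begins_of_forall_refines {x : ℕ → V} {M : V} (hM : ∀ a, P.refines a M)
    (hx : P.IsPoint x) : P.begins x M := by
  obtain ⟨m, hm⟩ := hx.shrink 0
  exact ⟨m, P.strict_of_strict_of_refines hm (hM _)⟩

namespace IsPoint

variable {x : ℕ → V}

lemma eventually_strict (hx : P.IsPoint x) {c : V} (hc : P.begins x c) :
    ∀ᶠ m in atTop, P.strict (x m) c := by
  obtain ⟨j, hj⟩ := hc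
  filter_upwards [eventually_ge_atTop j] with m hm
  exact P.strict_of_refines_of_strict (P.refines_of_le hx.mono hm) hj

lemma eventually_decides (hx : P.IsPoint x) {u v : V} (huv : P.apart u v) :
    ∀ᶠ m in atTop, P.apart (x m) u ∨ P.apart (x m) v := by
  obtain ⟨j, hj⟩ := hx.decides u v huv
  filter_upwards [eventually_ge_atTop j] with m hm
  have hmj := P.refines_of_le hx.mono hm
  exact hj.imp (P.apart_of_refines_of_apart hmj) (P.apart_of_refines_of_apart hmj)

lemma eventually_admissible (hx : P.IsPoint x) {c : V} (hc : P.begins x c) (w : V × V) :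
    ∀ᶠ m in atTop, P.Admissible w c (x m) :=
  (hx.eventually_strict hc).and (eventually_imp_distrib_left.2 hx.eventually_decides)

lemma exists_admissible_index (hx : P.IsPoint x) {c : V} (hc : P.begins x c) (w : V × V)
    (N : ℕ) : ∃ i, N ≤ i ∧ P.Admissible w c (x i) :=
  ((eventually_ge_atTop N).and (hx.eventually_admissible hc w)).exists

end IsPoint

lemma exists_admissible (hA : P.AllDotsInhabited) (w : V × V) (c : V) :
    ∃ d, P.Admissible w c d := by
  obtain ⟨x, hx, hc⟩ := hA c
  obtain ⟨m, hm⟩ := (hx.eventually_admissible hc w).exists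
  exact ⟨x m, hm⟩

end PreNaturalSpace

section Baire

@[simp] lemma BairePre.refines_iff {a b : List ℕ} : BairePre.refines a b ↔ b <+: a :=
  Iff.rfl

lemma BairePre.exists_le_length {p : ℕ → List ℕ} (hp : BairePre.IsPoint p) (N : ℕ) :
    ∃ m, N ≤ (p m).length := by
  induction N with
  | zero => exact ⟨0, Nat.zero_le _⟩
  | succ N ih =>
    obtain ⟨m, hm⟩ := ih
    obtain ⟨j, hj, hne⟩ := hp.shrink m
    have hlt : (p m).length < (p j).length :=
      lt_of_le_of_ne hj.length_le fun h => hne (hj.eq_of_length h).symm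
    exact ⟨j, by omega⟩

lemma BairePre.apart_or_apart_of_length_lt {a b l : List ℕ} (hab : BairePre.apart a b)
    (ha : a.length < l.length) (hb : b.length < l.length) :
    BairePre.apart l a ∨ BairePre.apart l b := by
  have hla : ¬ l <+: a := fun h => absurd h.length_le (by omega)
  have hlb : ¬ l <+: b := fun h => absurd h.length_le (by omega)
  by_cases hal : a <+: l
  · exact Or.inr ⟨hlb, fun hbl => (List.prefix_or_prefix_of_prefix hal hbl).elim hab.1 hab.2⟩
  · exact Or.inl ⟨hla, hal⟩

lemma length_initSegs (α : ℕ → ℕ) (n : ℕ) : (initSegs α n).length = n := by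
  simp [initSegs]

lemma initSegs_succ (α : ℕ → ℕ) (n : ℕ) :
    initSegs α (n + 1) = initSegs α n ++ [α n] := by
  simp [initSegs, List.range_succ]

lemma isPoint_initSegs (α : ℕ → ℕ) : BairePre.IsPoint (initSegs α) where
  mono n := by simp [initSegs_succ]
  shrink n := ⟨n + 1, by simp [initSegs_succ], by simp [initSegs_succ]⟩
  decides a b hab := ⟨a.length + b.length + 1,
    BairePre.apart_or_apart_of_length_lt hab (by simp [length_initSegs])
      (by simp [length_initSegs])⟩

end Baire

namespace PreNaturalSpace

section BaireMap

variable {V : Type} (P : PreNaturalSpace V) (hA : P.AllDotsInhabited) (σ : ℕ → V × V)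
  (e : ℕ → V) (M : V)

open Classical in
noncomputable def baireStep (k : ℕ) (c : V) (n : ℕ) : V :=
  if P.Admissible (σ k) c (e n) then e n else (exists_admissible hA (σ k) c).choose

noncomputable def baireDot (l : List ℕ) : V :=
  l.zipIdx.foldl (fun c nk => P.baireStep hA σ e nk.2 c nk.1) M

variable {P hA σ e M}

lemma baireStep_admissible (k : ℕ) (c : V) (n : ℕ) :
    P.Admissible (σ k) c (P.baireStep hA σ e k c n) := by
  unfold baireStep
  split_ifs with h
  · exact h
  · exact (exists_admissible hA (σ k) c).choose_spec

lemma baireStep_of_admissible {k : ℕ} {c : V} {n : ℕ} (h : P.Admissible (σ k) c (e n)) :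
    P.baireStep hA σ e k c n = e n :=
  if_pos h

lemma baireDot_append_singleton (l : List ℕ) (n : ℕ) :
    P.baireDot hA σ e M (l ++ [n]) = P.baireStep hA σ e l.length (P.baireDot hA σ e M l) n := by
  simp [baireDot, List.zipIdx_append]

lemma baireDot_append_singleton_admissible (l : List ℕ) (n : ℕ) :
    P.Admissible (σ l.length) (P.baireDot hA σ e M l) (P.baireDot hA σ e M (l ++ [n])) := by
  rw [baireDot_append_singleton]
  exact baireStep_admissible _ _ _

lemma baireDot_refines_of_prefix {l l' : List ℕ} (h : l <+: l') :
    P.refines (P.baireDot hA σ e M l') (P.baireDot hA σ e M l) := by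
  obtain ⟨t, rfl⟩ := h
  induction t using List.reverseRecOn with
  | nil => simpa using P.refines_refl _
  | append_singleton t n ih =>
    rw [← List.append_assoc]
    exact P.refines_trans _ _ _ (baireDot_append_singleton_admissible _ n).1.1 ih

lemma baireDot_strict_of_prefix {l l' : List ℕ} (h : l <+: l') (hne : l ≠ l') :
    P.strict (P.baireDot hA σ e M l') (P.baireDot hA σ e M l) := by
  obtain ⟨t, rfl⟩ := h
  induction t using List.reverseRecOn with
  | nil => simp at hne
  | append_singleton t n _ =>
    rw [← List.append_assoc]
    exact P.strict_of_strict_of_refines (baireDot_append_singleton_admissible _ n).1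
      (baireDot_refines_of_prefix ⟨t, rfl⟩)

lemma baireDot_decides {l : List ℕ} {k : ℕ} (hk : k < l.length)
    (hw : P.apart (σ k).1 (σ k).2) :
    P.apart (P.baireDot hA σ e M l) (σ k).1 ∨ P.apart (P.baireDot hA σ e M l) (σ k).2 := by
  have htake : l.take (k + 1) = l.take k ++ [l[k]] := by
    rw [List.take_add_one, List.getElem?_eq_getElem hk]; rfl
  have hadm : P.Admissible (σ k) (P.baireDot hA σ e M (l.take k))
      (P.baireDot hA σ e M (l.take (k + 1))) := by
    rw [htake]
    convert baireDot_append_singleton_admissible (l.take k) l[k] using 2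
    simp [hk.le]
  have href : P.refines (P.baireDot hA σ e M l) (P.baireDot hA σ e M (l.take (k + 1))) :=
    baireDot_refines_of_prefix (List.take_prefix _ _)
  exact (hadm.2 hw).imp (P.apart_of_refines_of_apart href) (P.apart_of_refines_of_apart href)

lemma bairePre_apart_of_baireDot_apart {l l' : List ℕ}
    (h : P.apart (P.baireDot hA σ e M l) (P.baireDot hA σ e M l')) : BairePre.apart l l' :=
  ⟨fun hll' => P.not_apart_of_refines (baireDot_refines_of_prefix hll') (P.apart_symm _ _ h),
    fun hl'l => P.not_apart_of_refines (baireDot_refines_of_prefix hl'l) h⟩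

lemma isPoint_baireDot (hσ : Function.Surjective σ) {p : ℕ → List ℕ}
    (hp : BairePre.IsPoint p) :
    P.IsPoint fun n => P.baireDot hA σ e M (p n) where
  mono n := baireDot_refines_of_prefix (hp.mono n)
  shrink n := by
    obtain ⟨m, hm, hne⟩ := hp.shrink n
    exact ⟨m, baireDot_strict_of_prefix hm (Ne.symm hne)⟩
  decides u v huv := by
    obtain ⟨k, hk⟩ := hσ (u, v)
    obtain ⟨m, hm⟩ := BairePre.exists_le_length hp (k + 1)
    have hw : P.apart (σ k).1 (σ k).2 := by rw [hk]; exact huv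
    exact ⟨m, by simpa [hk] using baireDot_decides (by omega) hw⟩

variable (P hA e M) in
noncomputable def baireMorphism (hσ : Function.Surjective σ) : RefMorphism BairePre P where
  toFun := P.baireDot hA σ e M
  maps_points _ hp := isPoint_baireDot hσ hp
  reflects_apart _ _ _ _ := fun ⟨n, hn⟩ => ⟨n, bairePre_apart_of_baireDot_apart hn⟩

end BaireMap

section Chase

variable {V : Type} {P : PreNaturalSpace V} {x : ℕ → V} (hx : P.IsPoint x) {M : V}
  (hM : ∀ a, P.refines a M) (σ : ℕ → V × V)

noncomputable def chaseIndex : ℕ → ℕ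
  | 0 => (hx.exists_admissible_index (begins_of_forall_refines hM hx) (σ 0) 1).choose
  | k + 1 =>
    (hx.exists_admissible_index (hx.shrink (chaseIndex k)) (σ (k + 1)) (k + 2)).choose

lemma chaseIndex_zero_spec :
    1 ≤ chaseIndex hx hM σ 0 ∧ P.Admissible (σ 0) M (x (chaseIndex hx hM σ 0)) :=
  (hx.exists_admissible_index (begins_of_forall_refines hM hx) (σ 0) 1).choose_spec

lemma chaseIndex_succ_spec (k : ℕ) :
    k + 2 ≤ chaseIndex hx hM σ (k + 1) ∧
      P.Admissible (σ (k + 1)) (x (chaseIndex hx hM σ k)) (x (chaseIndex hx hM σ (k + 1))) :=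
  (hx.exists_admissible_index (hx.shrink (chaseIndex hx hM σ k)) (σ (k + 1)) (k + 2)).choose_spec

lemma succ_le_chaseIndex : ∀ k, k + 1 ≤ chaseIndex hx hM σ k
  | 0 => (chaseIndex_zero_spec hx hM σ).1
  | k + 1 => (chaseIndex_succ_spec hx hM σ k).1

variable {hA : P.AllDotsInhabited} {e : ℕ → V}

lemma baireDot_initSegs_succ (α : ℕ → ℕ) (k : ℕ) :
    P.baireDot hA σ e M (initSegs α (k + 1)) =
      P.baireStep hA σ e k (P.baireDot hA σ e M (initSegs α k)) (α k) := by
  rw [initSegs_succ, baireDot_append_singleton, length_initSegs]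

lemma baireDot_initSegs_chaseIndex (he : Function.Surjective e) (k : ℕ) :
    P.baireDot hA σ e M
        (initSegs (fun i => Function.surjInv he (x (chaseIndex hx hM σ i))) (k + 1)) =
      x (chaseIndex hx hM σ k) := by
  have hsurj (i : ℕ) :
      e (Function.surjInv he (x (chaseIndex hx hM σ i))) = x (chaseIndex hx hM σ i) :=
    Function.surjInv_eq he _
  induction k with
  | zero =>
    rw [baireDot_initSegs_succ, baireStep_of_admissible] <;> rw [hsurj]
    exact (chaseIndex_zero_spec hx hM σ).2
  | succ k ih =>
    rw [baireDot_initSegs_succ, ih, baireStep_of_admissible] <;> rw [hsurj]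
    exact (chaseIndex_succ_spec hx hM σ k).2

end Chase

theorem exists_baireMorphism_pointMap_pEquiv {V : Type} {P : PreNaturalSpace V}
    (hA : P.AllDotsInhabited) {e : ℕ → V} (he : Function.Surjective e) {M : V}
    (hM : ∀ a, P.refines a M) {σ : ℕ → V × V} (hσ : Function.Surjective σ) (x : P.Pt) :
    ∃ p : BairePre.Pt, P.pEquiv ((P.baireMorphism hA e M hσ).pointMap p) x := by
  let α (i : ℕ) : ℕ := Function.surjInv he (x.1 (chaseIndex x.2 hM σ i))
  refine ⟨⟨initSegs α, isPoint_initSegs α⟩, ?_⟩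
  rintro ⟨n, hn⟩
  change P.apart (P.baireDot hA σ e M (initSegs α n)) (x.1 n) at hn
  cases n with
  | zero => exact P.not_apart_of_refines (hM _) (P.apart_symm _ _ hn)
  | succ k =>
    rw [baireDot_initSegs_chaseIndex] at hn
    exact P.not_apart_of_refines (P.refines_of_le x.2.mono (succ_le_chaseIndex x.2 hM σ k)) hn

end PreNaturalSpace

/-- classical: for every natural space `𝒱` there is a refinement
morphism from natural Baire space to `𝒱`, surjective up to equivalence. -/
theorem stmt11 {V : Type} (P : PreNaturalSpace V) (hP : P.IsNaturalSpace) :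
    ∃ f : RefMorphism BairePre P, ∀ x : P.Pt, ∃ p : BairePre.Pt,
      P.pEquiv (f.pointMap p) x := by
  obtain ⟨⟨M, hM⟩, hA⟩ := hP
  have : Nonempty V := ⟨M⟩
  have := P.countable'
  obtain ⟨e, he⟩ := exists_surjective_nat V
  obtain ⟨σ, hσ⟩ := exists_surjective_nat (V × V)
  exact ⟨P.baireMorphism hA e M hσ,
    PreNaturalSpace.exists_baireMorphism_pointMap_pEquiv hA he hM hσ⟩
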